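/- arXiv:2407.07491 — 5 statements merged into one kernel-verified Lean document; each statement's English description precedes it below -/
import Mathlib

section
/- Let Ω ⊆ ℂ be nonempty and T : Ω → L(H) a map into bounded operators on a Hilbert space H satisfying (w - z)·T(w)T(z) = T(w) - T(z) for all w, z ∈ Ω. Then there exists a closed linear relation A on H such that Ω ⊆ ρ(A) and (A - w)⁻¹ = T(w) for all w ∈ Ω. -/
/-- `T` is the (everywhere-defined bounded) resolvent of the linear relation `A` at `w`:
`T = (A - w)⁻¹` as a graph condition. -/
def IsResolventAt {H : Type*} [NormedAddCommGroup H] [InnerProductSpace ℂ H]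
    (A : Submodule ℂ (H × H)) (w : ℂ) (T : H →L[ℂ] H) : Prop :=
  ∀ f u : H, T f = u ↔ (u, f + w • u) ∈ A

/-!
Fix `w₀ ∈ Ω`. The relation `A` with `(u, g) ∈ A ↔ T w₀ (g - w₀ • u) = u` is the kernel of a
bounded operator on `H × H`, hence closed, and `T w₀ = (A - w₀)⁻¹` by construction. For any
other `w ∈ Ω` the resolvent identity, read in both orders, shows that `T w f = u` holds exactly
when `T w₀ (f + (w - w₀) • u) = u`, i.e. when `(u, f + w • u) ∈ A`.
-/

theorem LinearMap.apply_eq_iff_of_resolvent_identity {R M : Type*} [Ring R] [AddCommGroup M]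
    [Module R M] {S T : M →ₗ[R] M} {a : R} (hST : ∀ x, a • S (T x) = S x - T x)
    (hTS : ∀ x, a • T (S x) = S x - T x) (f u : M) :
    S f = u ↔ T (f + a • u) = u := by
  constructor
  · rintro rfl
    rw [map_add, map_smul, hTS]
    abel
  · intro h
    have := hST (f + a • u)
    rw [h, map_add, map_smul] at this
    calc S f = (S f + a • S u - u) - a • S u + u := by abel
      _ = u := by rw [← this]; abel

namespace ContinuousLinearMap

variable {𝕜 E : Type*} [NontriviallyNormedField 𝕜] [NormedAddCommGroup E] [NormedSpace 𝕜 E]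

/-- The linear relation `A` with `(A - w₀)⁻¹ = T₀`, as a kernel. -/
def resolventRelation (w₀ : 𝕜) (T₀ : E →L[𝕜] E) : Submodule 𝕜 (E × E) :=
  (T₀ ∘L (snd 𝕜 E E - w₀ • fst 𝕜 E E) - fst 𝕜 E E).ker

theorem mem_resolventRelation {w₀ : 𝕜} {T₀ : E →L[𝕜] E} {u g : E} :
    (u, g) ∈ resolventRelation w₀ T₀ ↔ T₀ (g - w₀ • u) = u := by
  simp [resolventRelation, sub_eq_zero]

theorem isClosed_resolventRelation (w₀ : 𝕜) (T₀ : E →L[𝕜] E) :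
    IsClosed (resolventRelation w₀ T₀ : Set (E × E)) :=
  isClosed_ker _

end ContinuousLinearMap

open ContinuousLinearMap in
theorem isResolventAt_resolventRelation {H : Type*} [NormedAddCommGroup H]
    [InnerProductSpace ℂ H] {w w₀ : ℂ} {S T₀ : H →L[ℂ] H}
    (hST : (w - w₀) • (S ∘L T₀) = S - T₀) (hTS : (w₀ - w) • (T₀ ∘L S) = T₀ - S) :
    IsResolventAt (resolventRelation w₀ T₀) w S := by
  intro f u
  have hTS' (x : H) : (w - w₀) • T₀ (S x) = S x - T₀ x := by
    have h : (w₀ - w) • T₀ (S x) = T₀ x - S x := congr($hTS x)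
    rw [← neg_sub w w₀, neg_smul, ← neg_sub (S x)] at h
    exact neg_injective h
  rw [mem_resolventRelation, add_sub_assoc, ← sub_smul]
  exact LinearMap.apply_eq_iff_of_resolvent_identity (S := S.toLinearMap)
    (T := T₀.toLinearMap) (fun x => congr($hST x)) hTS' f u

theorem stmt1_general {H : Type*} [NormedAddCommGroup H] [InnerProductSpace ℂ H]
    (Ω : Set ℂ) (hΩ : Ω.Nonempty) (T : ℂ → H →L[ℂ] H)
    (hT : ∀ w ∈ Ω, ∀ z ∈ Ω, (w - z) • (T w ∘L T z) = T w - T z) :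
    ∃ A : Submodule ℂ (H × H), IsClosed (A : Set (H × H)) ∧
      ∀ w ∈ Ω, IsResolventAt A w (T w) := by
  obtain ⟨w₀, hw₀⟩ := hΩ
  exact ⟨_, ContinuousLinearMap.isClosed_resolventRelation w₀ (T w₀), fun w hw =>
    isResolventAt_resolventRelation (hT w hw w₀ hw₀) (hT w₀ hw₀ w hw)⟩

theorem stmt1 {H : Type*} [NormedAddCommGroup H] [InnerProductSpace ℂ H] [CompleteSpace H]
    (Ω : Set ℂ) (hΩ : Ω.Nonempty) (T : ℂ → H →L[ℂ] H)
    (hT : ∀ w ∈ Ω, ∀ z ∈ Ω, (w - z) • (T w ∘L T z) = T w - T z) :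
    ∃ A : Submodule ℂ (H × H), IsClosed (A : Set (H × H)) ∧
      ∀ w ∈ Ω, IsResolventAt A w (T w) :=
  stmt1_general Ω hΩ T hT
end

section
/- Let ν be a finite complex Borel measure on ℝ, a, b ∈ ℂ, and q(ζ) = a + b·ζ + ∫ (1 + t·ζ)/(t - ζ) dν(t). If q is identically zero on ℂ \ ℝ, then a = 0, b = 0, and ν = 0. -/
/-!
Let `ν = ν₁ - ν₂ + i (ν₃ - ν₄)`, `m = ν(ℝ)` and `F ζ = ∫ dν(t) / (t - ζ)`. Since
`(1 + tζ)/(t - ζ) = ζ + (1 + ζ²)/(t - ζ)`, the hypothesis reads `a + bζ + mζ + (1 + ζ²) F ζ = 0`.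
At `ζ = ± i` the last term drops out, so `a = 0` and `m = -b`; hence `F` vanishes wherever
`1 + ζ² ≠ 0`. Regard `ν` as a continuous functional on `C(ℝ ∪ {∞}, ℂ)`. By Stone–Weierstrass,
`1` and the kernels `(t - ζ)⁻¹` with `|Im ζ| > 1` span a dense subspace: the resolvent identity
writes products of distinct kernels as differences, and a square is the limit of the products of
`(t - ζ)⁻¹` with `(t - rζ)⁻¹` as `r → 1`. So `ν` acts as `-b` times evaluation at `∞`, in
particular it kills every compactly supported function, so `ν = 0`, and then `b = -m = 0`.
-/

open MeasureTheory Complex ComplexConjugate Filter Topology OnePoint CompactlySupported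

noncomputable section

lemma ofReal_sub_ne_zero_of_im_ne_zero {ζ : ℂ} (hζ : ζ.im ≠ 0) (t : ℝ) : (t : ℂ) - ζ ≠ 0 :=
  fun h => hζ (by simpa using congrArg im h.symm)

lemma norm_inv_ofReal_sub_le {ζ : ℂ} (hζ : ζ.im ≠ 0) (t : ℝ) :
    ‖((t : ℂ) - ζ)⁻¹‖ ≤ |ζ.im|⁻¹ := by
  rw [norm_inv]
  refine inv_anti₀ (abs_pos.2 hζ) ?_
  simpa using abs_im_le_norm ((t : ℂ) - ζ)

def cauchyKernel (ζ : ℂ) (hζ : ζ.im ≠ 0) : C(OnePoint ℝ, ℂ) :=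
  continuousMapMk
    ⟨fun t => ((t : ℂ) - ζ)⁻¹,
      (continuous_ofReal.sub continuous_const).inv₀ (ofReal_sub_ne_zero_of_im_ne_zero hζ)⟩ 0 <| by
    rw [coclosedCompact_eq_cocompact, ← Metric.cobounded_eq_cocompact]
    exact tendsto_inv₀_cobounded.comp <| (tendsto_sub_const_cobounded ζ).comp <|
      RCLike.tendsto_ofReal_cobounded_cobounded ℂ

section cauchyKernel

variable {ζ η : ℂ} (hζ : ζ.im ≠ 0) (hη : η.im ≠ 0)

@[simp] lemma cauchyKernel_coe (t : ℝ) : cauchyKernel ζ hζ t = ((t : ℂ) - ζ)⁻¹ := rfl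

@[simp] lemma cauchyKernel_infty : cauchyKernel ζ hζ ∞ = 0 := rfl

lemma star_cauchyKernel :
    star (cauchyKernel ζ hζ) = cauchyKernel (conj ζ) (by simpa using hζ) := by
  ext x
  induction x using OnePoint.rec <;> simp

lemma cauchyKernel_mul_cauchyKernel (hne : ζ ≠ η) :
    cauchyKernel ζ hζ * cauchyKernel η hη =
      (ζ - η)⁻¹ • (cauchyKernel ζ hζ - cauchyKernel η hη) := by
  ext x
  induction x using OnePoint.rec with
  | infty => simp
  | coe t =>
    have := ofReal_sub_ne_zero_of_im_ne_zero hζ t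
    have := ofReal_sub_ne_zero_of_im_ne_zero hη t
    have := sub_ne_zero.2 hne
    simp only [ContinuousMap.mul_apply, ContinuousMap.smul_apply, ContinuousMap.sub_apply,
      cauchyKernel_coe, smul_eq_mul]
    field_simp
    ring

lemma norm_cauchyKernel_sub_le :
    ‖cauchyKernel ζ hζ - cauchyKernel η hη‖ ≤ ‖ζ - η‖ * (|ζ.im|⁻¹ * |η.im|⁻¹) := by
  refine (ContinuousMap.norm_le _ (by positivity)).2 fun x => ?_
  induction x using OnePoint.rec with
  | infty =>
    simp only [ContinuousMap.sub_apply, cauchyKernel_infty, sub_zero, norm_zero]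
    positivity
  | coe t =>
    have := ofReal_sub_ne_zero_of_im_ne_zero hζ t
    have := ofReal_sub_ne_zero_of_im_ne_zero hη t
    have key : ((t : ℂ) - ζ)⁻¹ - ((t : ℂ) - η)⁻¹ =
        (ζ - η) * (((t : ℂ) - ζ)⁻¹ * ((t : ℂ) - η)⁻¹) := by
      field_simp
      ring
    simp only [ContinuousMap.sub_apply, cauchyKernel_coe, key, norm_mul]
    gcongr
    exacts [norm_inv_ofReal_sub_le hζ t, norm_inv_ofReal_sub_le hη t]

end cauchyKernel

def herglotzKernel (ζ : ℂ) (hζ : ζ.im ≠ 0) : C(OnePoint ℝ, ℂ) :=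
  ζ • 1 + (1 + ζ ^ 2) • cauchyKernel ζ hζ

lemma herglotzKernel_coe {ζ : ℂ} (hζ : ζ.im ≠ 0) (t : ℝ) :
    herglotzKernel ζ hζ t = (1 + t * ζ) / (t - ζ) := by
  have := ofReal_sub_ne_zero_of_im_ne_zero hζ t
  simp only [herglotzKernel, ContinuousMap.add_apply, ContinuousMap.smul_apply,
    ContinuousMap.one_apply, cauchyKernel_coe, smul_eq_mul]
  field_simp
  ring

section density

open Submodule
open scoped Pointwise

def cauchyKernels : Set C(OnePoint ℝ, ℂ) :=
  {f | ∃ (ζ : ℂ) (hζ : 1 < |ζ.im|), f = cauchyKernel ζ (abs_pos.1 (one_pos.trans hζ))}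

lemma cauchyKernel_mem_cauchyKernels {ζ : ℂ} (hζ : ζ.im ≠ 0) (hζ₁ : 1 < |ζ.im|) :
    cauchyKernel ζ hζ ∈ cauchyKernels :=
  ⟨ζ, hζ₁, rfl⟩

lemma star_mem_cauchyKernels {f : C(OnePoint ℝ, ℂ)} (hf : f ∈ cauchyKernels) :
    star f ∈ cauchyKernels := by
  obtain ⟨ζ, hζ, rfl⟩ := hf
  rw [star_cauchyKernel]
  exact cauchyKernel_mem_cauchyKernels _ (by simpa using hζ)

lemma cauchyKernel_mul_self_mem_closure {ζ : ℂ} (hζ : ζ.im ≠ 0) (hζ₁ : 1 < |ζ.im|) :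
    cauchyKernel ζ hζ * cauchyKernel ζ hζ ∈
      closure (span ℂ cauchyKernels : Set C(OnePoint ℝ, ℂ)) := by
  set r : ℕ → ℝ := fun n => 1 + 1 / (n + 1)
  have hr : ∀ n, 1 < r n := fun n => lt_add_of_pos_right 1 Nat.one_div_pos_of_nat
  have him : ∀ n, 1 < |(r n * ζ).im| := fun n => by
    rw [im_ofReal_mul, abs_mul, abs_of_pos (one_pos.trans (hr n))]
    nlinarith [hr n]
  have him₀ : ∀ n, (r n * ζ).im ≠ 0 := fun n => abs_pos.1 (one_pos.trans (him n))
  have hmem (n : ℕ) : cauchyKernel ζ hζ * cauchyKernel _ (him₀ n) ∈ span ℂ cauchyKernels := by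
    have hne : ζ ≠ r n * ζ := fun h => by
      have h' : 1 * ζ.im = r n * ζ.im := by simpa using congrArg im h
      linarith [hr n, mul_right_cancel₀ hζ h']
    rw [cauchyKernel_mul_cauchyKernel _ _ hne]
    exact smul_mem _ _ (sub_mem (subset_span (cauchyKernel_mem_cauchyKernels hζ hζ₁))
      (subset_span (cauchyKernel_mem_cauchyKernels _ (him n))))
  have hlim : Tendsto (fun n => cauchyKernel _ (him₀ n)) atTop (𝓝 (cauchyKernel ζ hζ)) := by
    have hr₁ : Tendsto (fun n => (r n : ℂ) * ζ) atTop (𝓝 ζ) := by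
      have : Tendsto r atTop (𝓝 1) := by
        simpa [r] using tendsto_one_div_add_atTop_nhds_zero_nat.const_add (1 : ℝ)
      simpa using ((continuous_ofReal.tendsto 1).comp this).mul_const ζ
    rw [tendsto_iff_norm_sub_tendsto_zero] at hr₁ ⊢
    refine squeeze_zero (fun n => norm_nonneg _) (fun n => ?_) hr₁
    refine (norm_cauchyKernel_sub_le _ _).trans (mul_le_of_le_one_right (norm_nonneg _) ?_)
    exact mul_le_one₀ (inv_le_one_of_one_le₀ (him n).le) (by positivity)
      (inv_le_one_of_one_le₀ hζ₁.le)
  exact mem_closure_of_tendsto (tendsto_const_nhds.mul hlim) (Eventually.of_forall hmem)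

lemma mul_mem_closure_span_insert_one_cauchyKernels {f g : C(OnePoint ℝ, ℂ)}
    (hf : f ∈ insert 1 cauchyKernels) (hg : g ∈ insert 1 cauchyKernels) :
    f * g ∈ closure (span ℂ (insert 1 cauchyKernels) : Set C(OnePoint ℝ, ℂ)) := by
  have hK : span ℂ cauchyKernels ≤ span ℂ (insert 1 cauchyKernels) :=
    span_mono (Set.subset_insert _ _)
  rcases hf with rfl | ⟨ζ, hζ, rfl⟩
  · simpa using subset_closure (subset_span hg)
  rcases hg with rfl | ⟨η, hη, rfl⟩
  · simpa using subset_closure (hK (subset_span ⟨ζ, hζ, rfl⟩))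
  by_cases hne : ζ = η
  · subst hne
    exact closure_mono hK (cauchyKernel_mul_self_mem_closure _ hζ)
  · rw [cauchyKernel_mul_cauchyKernel _ _ hne]
    exact subset_closure (hK (smul_mem _ _ (sub_mem (subset_span ⟨ζ, hζ, rfl⟩)
      (subset_span ⟨η, hη, rfl⟩))))

theorem dense_span_insert_one_cauchyKernels :
    Dense (span ℂ (insert 1 cauchyKernels) : Set C(OnePoint ℝ, ℂ)) := by
  set W := (span ℂ (insert 1 cauchyKernels)).topologicalClosure
  have hW : IsClosed (W : Set C(OnePoint ℝ, ℂ)) := isClosed_topologicalClosure _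
  let B : Subalgebra ℂ C(OnePoint ℝ, ℂ) :=
    W.toSubalgebra (le_topologicalClosure _ (subset_span (Set.mem_insert _ _))) fun f g hf hg => by
      rw [← SetLike.mem_coe, ← hW.closure_eq]
      refine map_mem_closure₂ continuous_mul hf hg fun f hf g hg => ?_
      have hfg : f * g ∈ span ℂ (insert 1 cauchyKernels * insert 1 cauchyKernels) :=
        span_mul_span ℂ (insert 1 cauchyKernels) (insert 1 cauchyKernels) ▸ mul_mem_mul hf hg
      refine span_le.2 ?_ hfg
      rintro _ ⟨f, hf, g, hg, rfl⟩
      exact mul_mem_closure_span_insert_one_cauchyKernels hf hg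
  let A := StarAlgebra.adjoin ℂ cauchyKernels
  have hAB : (A : Set C(OnePoint ℝ, ℂ)) ⊆ B := by
    show A.toSubalgebra ≤ B
    rw [StarAlgebra.adjoin_toSubalgebra]
    refine Algebra.adjoin_le (Set.union_subset ?_ fun f hf => ?_)
    · exact fun f hf => le_topologicalClosure _ (subset_span (Set.mem_insert_of_mem _ hf))
    · have hf' := star_mem_cauchyKernels hf
      rw [star_star] at hf'
      exact le_topologicalClosure _ (subset_span (Set.mem_insert_of_mem _ hf'))
  have him : (2 * I).im ≠ 0 := by simp
  have hsep : A.SeparatesPoints := by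
    intro x y hxy
    refine ⟨_, ⟨cauchyKernel (2 * I) him, StarAlgebra.subset_adjoin ℂ _
      (cauchyKernel_mem_cauchyKernels him (by simp)), rfl⟩, ?_⟩
    have hne := ofReal_sub_ne_zero_of_im_ne_zero him
    induction x using OnePoint.rec <;> induction y using OnePoint.rec
    · exact absurd rfl hxy
    · simpa using (hne _).symm
    all_goals simp_all
  have hA := ContinuousMap.starSubalgebra_topologicalClosure_eq_top_of_separatesPoints A hsep
  refine dense_iff_closure_eq.2 (Set.eq_univ_of_forall fun f => ?_)
  have hf : f ∈ closure (A : Set C(OnePoint ℝ, ℂ)) := by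
    rw [← StarSubalgebra.topologicalClosure_coe, hA]
    trivial
  have hfW : f ∈ closure (W : Set C(OnePoint ℝ, ℂ)) := closure_mono hAB hf
  rwa [hW.closure_eq] at hfW

end density

lemma one_add_sq_ne_zero_of_one_lt_abs_im {ζ : ℂ} (hζ : 1 < |ζ.im|) : 1 + ζ ^ 2 ≠ 0 := by
  intro h
  have hre : 1 + (ζ.re ^ 2 - ζ.im ^ 2) = 0 := by simpa [sq] using congrArg re h
  have him : ζ.re * ζ.im = 0 := by simpa [sq, mul_comm] using congrArg im h
  have hsq : 1 < ζ.im ^ 2 := by nlinarith [sq_abs ζ.im, abs_nonneg ζ.im]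
  rcases mul_eq_zero.1 him with h0 | h0 <;> simp only [h0] at hre hsq <;> nlinarith

theorem eq_zero_and_eq_neg_smul_evalCLM_of_herglotzKernel (Λ : C(OnePoint ℝ, ℂ) →L[ℂ] ℂ)
    {a b : ℂ} (h : ∀ ζ (hζ : ζ.im ≠ 0), a + b * ζ + Λ (herglotzKernel ζ hζ) = 0) :
    a = 0 ∧ Λ = -b • ContinuousMap.evalCLM ℂ ∞ := by
  have h' : ∀ ζ (hζ : ζ.im ≠ 0),
      a + b * ζ + (ζ * Λ 1 + (1 + ζ ^ 2) * Λ (cauchyKernel ζ hζ)) = 0 := fun ζ hζ => by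
    simpa [herglotzKernel] using h ζ hζ
  have hI := h' I (by simp)
  have hI' := h' (-I) (by simp)
  simp only [neg_sq, I_sq, add_neg_cancel, zero_mul, add_zero] at hI hI'
  have ha : a = 0 := by linear_combination (hI + hI') / 2
  have h1 : Λ 1 = -b := by
    linear_combination (-I / 2) * (hI - hI') + (b + Λ 1) * I_sq
  refine ⟨ha, ContinuousLinearMap.ext_on dense_span_insert_one_cauchyKernels ?_⟩
  rintro _ (rfl | ⟨ζ, hζ, rfl⟩)
  · simp [h1]
  · have hK := h' ζ (abs_pos.1 (one_pos.trans hζ))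
    rw [ha, h1] at hK
    have : (1 + ζ ^ 2) * Λ (cauchyKernel ζ (abs_pos.1 (one_pos.trans hζ))) = 0 := by
      linear_combination hK
    simpa [one_add_sq_ne_zero_of_one_lt_abs_im hζ] using this

section integral

variable {X : Type*} [TopologicalSpace X]

def CompactlySupportedContinuousMap.toOnePoint [T2Space X] (u : C_c(X, ℝ)) :
    C(OnePoint X, ℂ) :=
  continuousMapMk ⟨fun x => (u x : ℂ), by fun_prop⟩ 0 <| by
    rw [coclosedCompact_eq_cocompact]
    simpa [Function.comp_def] using (continuous_ofReal.tendsto 0).comp (zero_at_infty u)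

@[simp] lemma CompactlySupportedContinuousMap.toOnePoint_coe [T2Space X] (u : C_c(X, ℝ))
    (x : X) : u.toOnePoint x = (u x : ℂ) := rfl

variable [MeasurableSpace X] [OpensMeasurableSpace X]

lemma OnePoint.integrable_continuousMap_coe (μ : Measure X) [IsFiniteMeasure μ]
    (f : C(OnePoint X, ℂ)) : Integrable (fun x : X => f x) μ :=
  .of_bound (f.continuous.comp continuous_coe).aestronglyMeasurable ‖f‖
    (.of_forall fun x => f.norm_coe_le_norm x)

def OnePoint.integralCLM (μ : Measure X) [IsFiniteMeasure μ] : C(OnePoint X, ℂ) →L[ℂ] ℂ :=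
  LinearMap.mkContinuous
    { toFun f := ∫ x, f x ∂μ
      map_add' f g := integral_add (integrable_continuousMap_coe μ f)
        (integrable_continuousMap_coe μ g)
      map_smul' c f := integral_smul c fun x : X => f x }
    (μ.real Set.univ) fun f => by
      simpa [mul_comm] using norm_integral_le_of_norm_le_const (μ := μ)
        (.of_forall fun x : X => f.norm_coe_le_norm x)

def OnePoint.complexIntegralCLM (μ₁ μ₂ μ₃ μ₄ : Measure X) [IsFiniteMeasure μ₁]
    [IsFiniteMeasure μ₂] [IsFiniteMeasure μ₃] [IsFiniteMeasure μ₄] : C(OnePoint X, ℂ) →L[ℂ] ℂ :=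
  (integralCLM μ₁ - integralCLM μ₂) + I • (integralCLM μ₃ - integralCLM μ₄)

lemma OnePoint.complexIntegralCLM_apply (μ₁ μ₂ μ₃ μ₄ : Measure X) [IsFiniteMeasure μ₁]
    [IsFiniteMeasure μ₂] [IsFiniteMeasure μ₃] [IsFiniteMeasure μ₄] (f : C(OnePoint X, ℂ)) :
    complexIntegralCLM μ₁ μ₂ μ₃ μ₄ f =
      (∫ x, f x ∂μ₁) - ∫ x, f x ∂μ₂ + I * ((∫ x, f x ∂μ₃) - ∫ x, f x ∂μ₄) := rfl

theorem eq_and_eq_of_complexIntegralCLM_eq_zero [T2Space X] [LocallyCompactSpace X]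
    [BorelSpace X] {μ₁ μ₂ μ₃ μ₄ : Measure X} [IsFiniteMeasure μ₁] [IsFiniteMeasure μ₂]
    [IsFiniteMeasure μ₃] [IsFiniteMeasure μ₄] [μ₁.Regular] [μ₂.Regular] [μ₃.Regular] [μ₄.Regular]
    (h : ∀ f : C(OnePoint X, ℂ), f ∞ = 0 → complexIntegralCLM μ₁ μ₂ μ₃ μ₄ f = 0) :
    μ₁ = μ₂ ∧ μ₃ = μ₄ := by
  have key (u : C_c(X, ℝ)) : ∫ x, u x ∂μ₁ = ∫ x, u x ∂μ₂ ∧ ∫ x, u x ∂μ₃ = ∫ x, u x ∂μ₄ := by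
    have hu := h u.toOnePoint rfl
    simp only [complexIntegralCLM_apply, CompactlySupportedContinuousMap.toOnePoint_coe,
      integral_complex_ofReal] at hu
    have hre := congrArg re hu
    have him := congrArg im hu
    simp only [add_re, add_im, sub_re, sub_im, mul_re, mul_im, ofReal_re, ofReal_im, I_re, I_im,
      zero_re, zero_im] at hre him
    exact ⟨by linarith, by linarith⟩
  exact ⟨Measure.ext_of_integral_eq_on_compactlySupported fun u => (key u).1,
    Measure.ext_of_integral_eq_on_compactlySupported fun u => (key u).2⟩

end integral

/-- Uniqueness of the data in the integral representation of quasi-Herglotz functions: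
if `q(ζ) = a + bζ + ∫ (1+tζ)/(t-ζ) dν(t)` vanishes identically on `ℂ \ ℝ`, then
`a = 0`, `b = 0` and `ν = 0`.  The finite complex Borel measure `ν` is encoded through
its Jordan decomposition `ν = ν₁ - ν₂ + i (ν₃ - ν₄)` into four finite nonnegative
measures, and `ν = 0` reads `ν₁ - ν₂ = 0` and `ν₃ - ν₄ = 0` setwise. -/
theorem stmt5 (ν₁ ν₂ ν₃ ν₄ : Measure ℝ)
    [IsFiniteMeasure ν₁] [IsFiniteMeasure ν₂] [IsFiniteMeasure ν₃] [IsFiniteMeasure ν₄]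
    (a b : ℂ)
    (hq : ∀ ζ : ℂ, ζ.im ≠ 0 → a + b * ζ +
      (((∫ t : ℝ, (1 + t * ζ) / (t - ζ) ∂ν₁) - ∫ t : ℝ, (1 + t * ζ) / (t - ζ) ∂ν₂) +
        Complex.I * ((∫ t : ℝ, (1 + t * ζ) / (t - ζ) ∂ν₃) -
          ∫ t : ℝ, (1 + t * ζ) / (t - ζ) ∂ν₄)) = 0) :
    a = 0 ∧ b = 0 ∧ ∀ s : Set ℝ, MeasurableSet s →
      (ν₁ s).toReal = (ν₂ s).toReal ∧ (ν₃ s).toReal = (ν₄ s).toReal := by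
  obtain ⟨rfl, hΛ⟩ :=
    eq_zero_and_eq_neg_smul_evalCLM_of_herglotzKernel (complexIntegralCLM ν₁ ν₂ ν₃ ν₄)
      fun ζ hζ => by simpa only [complexIntegralCLM_apply, herglotzKernel_coe] using hq ζ hζ
  obtain ⟨rfl, rfl⟩ : ν₁ = ν₂ ∧ ν₃ = ν₄ :=
    eq_and_eq_of_complexIntegralCLM_eq_zero fun f hf => by simp [hΛ, hf]
  have hb : b = 0 := by simpa [complexIntegralCLM_apply] using congrArg (· 1) hΛ
  exact ⟨rfl, hb, fun _ _ => ⟨rfl, rfl⟩⟩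
end
end

section
/- Let A be a self-adjoint operator on a Hilbert space H, φ, v ∈ H, φ_x(w) = (I + (w - i)(A - w)⁻¹)x the associated φ-fields, and suppose q : ρ(A) → ℂ satisfies (q(ζ) - q(-i))/(ζ + i) = ⟨φ_v(ζ), φ_φ(i)⟩ for all ζ ∈ ρ(A). Then (q(ζ) - q(conj w))/(ζ - conj w) = ⟨φ_v(ζ), φ_φ(w)⟩ for all ζ, w ∈ ρ(A) with ζ ≠ conj w. -/
open ComplexConjugate

/-! The resolvent identity gives the transition rule `φ_x(b) = φ_x(a) + (b - a) R(b) φ_x(a)`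
between φ-fields, and the adjoint relation `R(w)* = R(conj w)` moves the resolvent in
`φ_φ(w)` to the other side of the inner product. Together they express
`(ζ - conj w) ⟨φ_v(ζ), φ_φ(w)⟩` as `(ζ + i) ⟨φ_v(ζ), φ⟩ - (conj w + i) ⟨φ_v(conj w), φ⟩`,
and both terms are increments of `q` by the hypothesis at the base point `-i`. -/

theorem sub_eq_mul_of_div_eq {𝕜 : Type*} [Field 𝕜] {f g : 𝕜 → 𝕜} {a z : 𝕜}
    (h : z ≠ a → (f z - f a) / (z - a) = g z) : f z - f a = (z - a) * g z := by
  by_cases hz : z = a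
  · simp [hz]
  · rw [← h hz, mul_div_cancel₀ _ (sub_ne_zero.2 hz)]

section PhiField

variable {𝕜 E : Type*} [RCLike 𝕜] [NormedAddCommGroup E]

/-- The φ-field `φ_x(w) = (I + (w - c)(A - w)⁻¹) x`, with `R w` standing for `(A - w)⁻¹`. -/
def phiField [NormedSpace 𝕜 E] (R : 𝕜 → E →L[𝕜] E) (c : 𝕜) (x : E) (w : 𝕜) : E :=
  x + (w - c) • R w x

@[simp]
theorem phiField_self [NormedSpace 𝕜 E] (R : 𝕜 → E →L[𝕜] E) (c : 𝕜) (x : E) :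
    phiField R c x c = x := by
  simp [phiField]

theorem phiField_transition [NormedSpace 𝕜 E] {R : 𝕜 → E →L[𝕜] E} {a b : 𝕜}
    (hres : (b - a) • (R b ∘L R a) = R b - R a) (c : 𝕜) (x : E) :
    phiField R c x b = phiField R c x a + (b - a) • R b (phiField R c x a) := by
  have h := DFunLike.congr_fun hres x
  simp only [smul_apply, ContinuousLinearMap.comp_apply, sub_apply] at h
  rw [phiField, phiField, map_add, map_smul, smul_add, smul_comm (b - a) (a - c), h]
  module

variable [InnerProductSpace 𝕜 E] [CompleteSpace E] {R : 𝕜 → E →L[𝕜] E}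

theorem inner_phiField_left {w : 𝕜} (hadj : ContinuousLinearMap.adjoint (R w) = R (conj w))
    (c : 𝕜) (y z : E) :
    inner 𝕜 (phiField R c y w) z = inner 𝕜 y (z + (conj w - conj c) • R (conj w) z) := by
  rw [phiField, inner_add_left, inner_smul_left, ← ContinuousLinearMap.adjoint_inner_right,
    hadj, inner_add_right, inner_smul_right, map_sub]

theorem sub_mul_inner_phiField {w ζ : 𝕜}
    (hres : (conj w - ζ) • (R (conj w) ∘L R ζ) = R (conj w) - R ζ)
    (hadj : ContinuousLinearMap.adjoint (R w) = R (conj w)) (c : 𝕜) (x y : E) :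
    (ζ - conj w) * inner 𝕜 (phiField R c y w) (phiField R c x ζ) =
      (ζ - conj c) * inner 𝕜 y (phiField R c x ζ) -
        (conj w - conj c) * inner 𝕜 y (phiField R c x (conj w)) := by
  rw [inner_phiField_left hadj, phiField_transition hres]
  simp only [inner_add_right, inner_smul_right]
  ring

end PhiField

theorem stmt9_general {H : Type*} [NormedAddCommGroup H] [InnerProductSpace ℂ H] [CompleteSpace H]
    (ρ : Set ℂ) (R : ℂ → H →L[ℂ] H)
    (hres : ∀ w ∈ ρ, ∀ z ∈ ρ, (w - z) • (R w ∘L R z) = R w - R z)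
    (hconj : ∀ w ∈ ρ, (conj w : ℂ) ∈ ρ)
    (hadj : ∀ w ∈ ρ, ContinuousLinearMap.adjoint (R w) = R (conj w))
    (hi : Complex.I ∈ ρ)
    (v φ₀ : H) (φv φφ : ℂ → H)
    (hφv : ∀ w ∈ ρ, φv w = v + (w - Complex.I) • R w v)
    (hφφ : ∀ w ∈ ρ, φφ w = φ₀ + (w - Complex.I) • R w φ₀)
    (q : ℂ → ℂ)
    (hq : ∀ ζ ∈ ρ, ζ ≠ -Complex.I →
      (q ζ - q (-Complex.I)) / (ζ + Complex.I) =
        (inner ℂ (φφ Complex.I) (φv ζ) : ℂ)) :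
    ∀ ζ ∈ ρ, ∀ w ∈ ρ, ζ ≠ conj w →
      (q ζ - q (conj w)) / (ζ - conj w) = (inner ℂ (φφ w) (φv ζ) : ℂ) := by
  have hφ₀ : φφ Complex.I = φ₀ := (hφφ _ hi).trans (phiField_self R _ φ₀)
  have hincr : ∀ z ∈ ρ, q z - q (-Complex.I) = (z + Complex.I) * inner ℂ φ₀ (φv z) := by
    intro z hz
    have h := hq z hz
    rw [← sub_neg_eq_add, hφ₀] at h
    rw [← sub_neg_eq_add]
    exact sub_eq_mul_of_div_eq (f := q) (g := fun z => inner ℂ φ₀ (φv z)) h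
  intro ζ hζ w hw hne
  have hcw := hconj w hw
  have key := sub_mul_inner_phiField (hres _ hcw ζ hζ) (hadj w hw) Complex.I v φ₀
  simp only [phiField, Complex.conj_I] at key
  rw [← hφφ w hw, ← hφv ζ hζ, ← hφv _ hcw] at key
  rw [div_eq_iff (sub_ne_zero.2 hne)]
  linear_combination hincr ζ hζ - hincr _ hcw - key

/-- If `q` satisfies the Q-function identity at the base point `-i`, then it satisfies
it at every pair of points: `(q(ζ) - q(conj w))/(ζ - conj w) = ⟨φ_v(ζ), φ_φ(w)⟩`.
The self-adjoint operator `A` is encoded by its resolvent family `R` on the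
conjugation-invariant resolvent set `ρ ∋ ±i`, satisfying the resolvent identity and
`((A - w)⁻¹)* = (A - conj w)⁻¹`; the paper's inner product `⟨x, y⟩`, conjugate-linear in
the second argument, is Mathlib's `⟪y, x⟫`. -/
theorem stmt9 {H : Type*} [NormedAddCommGroup H] [InnerProductSpace ℂ H] [CompleteSpace H]
    (ρ : Set ℂ) (R : ℂ → H →L[ℂ] H)
    (hres : ∀ w ∈ ρ, ∀ z ∈ ρ, (w - z) • (R w ∘L R z) = R w - R z)
    (hconj : ∀ w ∈ ρ, (conj w : ℂ) ∈ ρ)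
    (hadj : ∀ w ∈ ρ, ContinuousLinearMap.adjoint (R w) = R (conj w))
    (hi : Complex.I ∈ ρ) (hmi : -Complex.I ∈ ρ)
    (v φ₀ : H) (φv φφ : ℂ → H)
    (hφv : ∀ w ∈ ρ, φv w = v + (w - Complex.I) • R w v)
    (hφφ : ∀ w ∈ ρ, φφ w = φ₀ + (w - Complex.I) • R w φ₀)
    (q : ℂ → ℂ)
    (hq : ∀ ζ ∈ ρ, ζ ≠ -Complex.I →
      (q ζ - q (-Complex.I)) / (ζ + Complex.I) =
        (inner ℂ (φφ Complex.I) (φv ζ) : ℂ)) :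
    ∀ ζ ∈ ρ, ∀ w ∈ ρ, ζ ≠ conj w →
      (q ζ - q (conj w)) / (ζ - conj w) = (inner ℂ (φφ w) (φv ζ) : ℂ) :=
  stmt9_general ρ R hres hconj hadj hi v φ₀ φv φφ hφv hφφ q hq
end

section
/- Let A be a self-adjoint operator on a Hilbert space H, φ, v ∈ H, q : ρ(A) → ℂ a function satisfying the Q-function identity (q(ζ) - q(conj w))/(ζ - conj w) = ⟨φ_v(ζ), φ_φ(w)⟩, c ∈ ℂ with q + c not identically zero, and for z ∈ ρ(A) with q(z) + c ≠ 0 define T(z)f = (A - z)⁻¹f - (⟨f, φ_φ(conj z)⟩/(q(z) + c))·φ_v(z). Then T satisfies the resolvent identity (w - z)·T(w)T(z) = T(w) - T(z) on its domain of definition. -/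
open ComplexConjugate

/-!
Write `Q = q + c`, `a_z = ⟨f, φ_φ(conj z)⟩`. The resolvent identity gives
`(w - z)(A - w)⁻¹(A - z)⁻¹ = (A - w)⁻¹ - (A - z)⁻¹` and `(w - z)(A - w)⁻¹φ_v(z) = φ_v(w) - φ_v(z)`;
taking adjoints, `(w - z)⟨(A - z)⁻¹f, φ_φ(conj w)⟩ = a_w - a_z`, and the Q-function identity
gives `(w - z)⟨φ_v(z), φ_φ(conj w)⟩ = Q(w) - Q(z)`. Expanding `(w - z)T(w)T(z)f` with these four
identities, the rank-one corrections telescope to `(a_z/Q(z))φ_v(z) - (a_w/Q(w))φ_v(w)`.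
-/

section ResolventFamily

variable {E : Type*} [NormedAddCommGroup E] [NormedSpace ℂ E]
  {ρ : Set ℂ} {R : ℂ → E →L[ℂ] E}

theorem resolvent_apply_resolvent_apply
    (hres : ∀ w ∈ ρ, ∀ z ∈ ρ, (w - z) • (R w ∘L R z) = R w - R z)
    {w z : ℂ} (hw : w ∈ ρ) (hz : z ∈ ρ) (hwz : w ≠ z) (x : E) :
    R w (R z x) = (w - z)⁻¹ • (R w x - R z x) := by
  rw [eq_inv_smul_iff₀ (sub_ne_zero.mpr hwz)]
  simpa using congrArg (· x) (hres w hw z hz)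

theorem resolvent_apply_phiField
    (hres : ∀ w ∈ ρ, ∀ z ∈ ρ, (w - z) • (R w ∘L R z) = R w - R z)
    {x : E} {μ : ℂ} {φx : ℂ → E} (hφx : ∀ u ∈ ρ, φx u = x + (u - μ) • R u x)
    {w z : ℂ} (hw : w ∈ ρ) (hz : z ∈ ρ) (hwz : w ≠ z) :
    R w (φx z) = (w - z)⁻¹ • (φx w - φx z) := by
  rw [hφx w hw, hφx z hz, map_add, map_smul, resolvent_apply_resolvent_apply hres hw hz hwz]
  match_scalars <;> field_simp <;> ring

end ResolventFamily

theorem inner_phiField_resolvent_apply {H : Type*} [NormedAddCommGroup H]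
    [InnerProductSpace ℂ H] [CompleteSpace H] {ρ : Set ℂ} {R : ℂ → H →L[ℂ] H}
    (hres : ∀ w ∈ ρ, ∀ z ∈ ρ, (w - z) • (R w ∘L R z) = R w - R z)
    (hconj : ∀ w ∈ ρ, (conj w : ℂ) ∈ ρ)
    (hadj : ∀ w ∈ ρ, ContinuousLinearMap.adjoint (R w) = R (conj w))
    {x : H} {μ : ℂ} {φx : ℂ → H} (hφx : ∀ u ∈ ρ, φx u = x + (u - μ) • R u x)
    {w z : ℂ} (hw : w ∈ ρ) (hz : z ∈ ρ) (hwz : w ≠ z) (f : H) :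
    inner ℂ (φx (conj w)) (R z f) =
      (w - z)⁻¹ * (inner ℂ (φx (conj w)) f - inner ℂ (φx (conj z)) f) := by
  have hwz' : conj z ≠ conj w := fun h => hwz ((starRingEnd ℂ).injective h).symm
  rw [← ContinuousLinearMap.adjoint_inner_left, hadj z hz,
    resolvent_apply_phiField hres hφx (hconj z hz) (hconj w hw) hwz', inner_smul_left,
    inner_sub_left, ← map_sub, ← map_inv₀, Complex.conj_conj, ← neg_sub w z, inv_neg, ← neg_sub]
  ring

theorem inner_phiField_eq_of_qFunction {H : Type*} [NormedAddCommGroup H]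
    [InnerProductSpace ℂ H] {ρ : Set ℂ} (hconj : ∀ w ∈ ρ, (conj w : ℂ) ∈ ρ)
    {φv φφ : ℂ → H} {q : ℂ → ℂ}
    (hq : ∀ ζ ∈ ρ, ∀ w ∈ ρ, q ζ - q (conj w) = (ζ - conj w) * (inner ℂ (φφ w) (φv ζ) : ℂ))
    {w z : ℂ} (hw : w ∈ ρ) (hz : z ∈ ρ) (hwz : w ≠ z) :
    inner ℂ (φφ (conj w)) (φv z) = (w - z)⁻¹ * (q w - q z) := by
  have h := hq z hz (conj w) (hconj w hw)
  rw [Complex.conj_conj] at h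
  rw [eq_inv_mul_iff_mul_eq₀ (sub_ne_zero.mpr hwz)]
  linear_combination h

/-- The self-adjoint operator `A` is encoded by its resolvent family `R` on the
conjugation-invariant resolvent set `ρ`; the paper's inner product `⟨x, y⟩`, conjugate-linear in
the second argument, is Mathlib's `⟪y, x⟫`. -/
theorem stmt10_general {H : Type*} [NormedAddCommGroup H] [InnerProductSpace ℂ H] [CompleteSpace H]
    (ρ : Set ℂ) (R : ℂ → H →L[ℂ] H)
    (hres : ∀ w ∈ ρ, ∀ z ∈ ρ, (w - z) • (R w ∘L R z) = R w - R z)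
    (hconj : ∀ w ∈ ρ, (conj w : ℂ) ∈ ρ)
    (hadj : ∀ w ∈ ρ, ContinuousLinearMap.adjoint (R w) = R (conj w))
    (v φ₀ : H) (φv φφ : ℂ → H)
    (hφv : ∀ w ∈ ρ, φv w = v + (w - Complex.I) • R w v)
    (hφφ : ∀ w ∈ ρ, φφ w = φ₀ + (w - Complex.I) • R w φ₀)
    (q : ℂ → ℂ)
    (hq : ∀ ζ ∈ ρ, ∀ w ∈ ρ,
      q ζ - q (conj w) = (ζ - conj w) * (inner ℂ (φφ w) (φv ζ) : ℂ))
    (c : ℂ)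
    (T : ℂ → H → H)
    (hT : ∀ z ∈ ρ, ∀ f : H,
      T z f = R z f - ((q z + c)⁻¹ * (inner ℂ (φφ (conj z)) f : ℂ)) • φv z) :
    ∀ w ∈ ρ, ∀ z ∈ ρ, q w + c ≠ 0 → q z + c ≠ 0 → ∀ f : H,
      (w - z) • T w (T z f) = T w f - T z f := by
  intro w hw z hz hQw hQz f
  rcases eq_or_ne w z with rfl | hwz
  · simp
  simp only [hT z hz, hT w hw, map_sub, map_smul, inner_sub_right, inner_smul_right,
    resolvent_apply_resolvent_apply hres hw hz hwz, resolvent_apply_phiField hres hφv hw hz hwz,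
    inner_phiField_resolvent_apply hres hconj hadj hφφ hw hz hwz,
    inner_phiField_eq_of_qFunction hconj hq hw hz hwz]
  match_scalars <;> field_simp
  ring

/-- The perturbed resolvent
`T(z) f = (A - z)⁻¹ f - (⟨f, φ_φ(conj z)⟩/(q(z) + c)) φ_v(z)`
satisfies the resolvent identity `(w - z) T(w) T(z) = T(w) - T(z)` wherever it is
defined.  The self-adjoint operator `A` is encoded by its resolvent family `R` on the
conjugation-invariant resolvent set `ρ ∋ i`, satisfying the resolvent identity and
`((A - w)⁻¹)* = (A - conj w)⁻¹`; `φ_x` is the φ-field of `x`; `q` satisfies the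
Q-function identity `q(ζ) - q(conj w) = (ζ - conj w)·⟨φ_v(ζ), φ_φ(w)⟩`; the paper's
inner product `⟨x, y⟩`, conjugate-linear in the second argument, is Mathlib's `⟪y, x⟫`. -/
theorem stmt10 {H : Type*} [NormedAddCommGroup H] [InnerProductSpace ℂ H] [CompleteSpace H]
    (ρ : Set ℂ) (R : ℂ → H →L[ℂ] H)
    (hres : ∀ w ∈ ρ, ∀ z ∈ ρ, (w - z) • (R w ∘L R z) = R w - R z)
    (hconj : ∀ w ∈ ρ, (conj w : ℂ) ∈ ρ)
    (hadj : ∀ w ∈ ρ, ContinuousLinearMap.adjoint (R w) = R (conj w))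
    (hi : Complex.I ∈ ρ)
    (v φ₀ : H) (φv φφ : ℂ → H)
    (hφv : ∀ w ∈ ρ, φv w = v + (w - Complex.I) • R w v)
    (hφφ : ∀ w ∈ ρ, φφ w = φ₀ + (w - Complex.I) • R w φ₀)
    (q : ℂ → ℂ)
    (hq : ∀ ζ ∈ ρ, ∀ w ∈ ρ,
      q ζ - q (conj w) = (ζ - conj w) * (inner ℂ (φφ w) (φv ζ) : ℂ))
    (c : ℂ) (hc : ∃ ζ ∈ ρ, q ζ + c ≠ 0)
    (T : ℂ → H → H)
    (hT : ∀ z ∈ ρ, ∀ f : H,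
      T z f = R z f - ((q z + c)⁻¹ * (inner ℂ (φφ (conj z)) f : ℂ)) • φv z) :
    ∀ w ∈ ρ, ∀ z ∈ ρ, q w + c ≠ 0 → q z + c ≠ 0 → ∀ f : H,
      (w - z) • T w (T z f) = T w f - T z f :=
  stmt10_general ρ R hres hconj hadj v φ₀ φv φφ hφv hφφ q hq c T hT
end

section
/- In the setting of the perturbed resolvent T(z)f = (A - z)⁻¹f - k(z,f)·φ_v(z) with k(z,f) = ⟨f, φ_φ(conj z)⟩/(q(z)+c), the scalar function k satisfies the resolvent-type identity (w - z)·k(w, T(z)f) = k(w,f) - k(z,f) for all f ∈ H and all w, z ∈ ρ(A) with q(w)+c ≠ 0 and q(z)+c ≠ 0. -/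
open ComplexConjugate

/-!
Write `⟨·,·⟩` for the paper's inner product. For `h = φ_φ(conj w)`, the resolvent identity turns
the `(A - z)⁻¹ f` part of `⟨T(z) f, h⟩` into the difference quotient
`(⟨f, φ_φ(conj z)⟩ - ⟨f, φ_φ(conj w)⟩) / (z - w)`, and the Q-function identity turns
`⟨φ_v(z), h⟩` into `(q(z) - q(w)) / (z - w)`. After multiplying by `w - z`, what remains is
the scalar identity `k(z, f) (q(z) + c) = ⟨f, φ_φ(conj z)⟩`.
-/

section

variable {H : Type*} [NormedAddCommGroup H] [InnerProductSpace ℂ H]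

/-- The paper's φ-field `φ_x(w)`, with `R w` standing for `(A - w)⁻¹` and `μ` for `i`. -/
def resolventField (R : ℂ → H →L[ℂ] H) (μ : ℂ) (x : H) (w : ℂ) : H :=
  x + (w - μ) • R w x

theorem resolventField_sub {R : ℂ → H →L[ℂ] H} {a b : ℂ}
    (hres : (a - b) • (R a ∘L R b) = R a - R b) (μ : ℂ) (x : H) :
    resolventField R μ x a - resolventField R μ x b =
      (a - b) • R a (resolventField R μ x b) := by
  have hx : (a - b) • R a (R b x) = R a x - R b x := by
    simpa using congrArg (fun S : H →L[ℂ] H => S x) hres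
  simp only [resolventField, map_add, map_smul, smul_add]
  rw [smul_comm, hx]
  module

end

theorem stmt11_general {H : Type*} [NormedAddCommGroup H] [InnerProductSpace ℂ H] [CompleteSpace H]
    (ρ : Set ℂ) (R : ℂ → H →L[ℂ] H)
    (hres : ∀ w ∈ ρ, ∀ z ∈ ρ, (w - z) • (R w ∘L R z) = R w - R z)
    (hconj : ∀ w ∈ ρ, (conj w : ℂ) ∈ ρ)
    (hadj : ∀ w ∈ ρ, ContinuousLinearMap.adjoint (R w) = R (conj w))
    (φ₀ : H) (φv φφ : ℂ → H)
    (hφφ : ∀ w ∈ ρ, φφ w = φ₀ + (w - Complex.I) • R w φ₀)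
    (q : ℂ → ℂ)
    (hq : ∀ ζ ∈ ρ, ∀ w ∈ ρ,
      q ζ - q (conj w) = (ζ - conj w) * (inner ℂ (φφ w) (φv ζ) : ℂ))
    (c : ℂ)
    (k : ℂ → H → ℂ)
    (hk : ∀ z ∈ ρ, ∀ f : H, k z f = (inner ℂ (φφ (conj z)) f : ℂ) / (q z + c))
    (T : ℂ → H → H)
    (hT : ∀ z ∈ ρ, ∀ f : H, T z f = R z f - k z f • φv z) :
    ∀ w ∈ ρ, ∀ z ∈ ρ, q w + c ≠ 0 → q z + c ≠ 0 → ∀ f : H,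
      (w - z) * k w (T z f) = k w f - k z f := by
  intro w hw z hz hqw hqz f
  have hcw := hconj w hw
  have hcz := hconj z hz
  have hφφ' : ∀ w ∈ ρ, φφ w = resolventField R Complex.I φ₀ w := hφφ
  have hdiff : inner ℂ (R (conj z) (φφ (conj w))) f * (z - w) =
      inner ℂ (φφ (conj z)) f - inner ℂ (φφ (conj w)) f := by
    have h := resolventField_sub (hres _ hcz _ hcw) Complex.I φ₀
    rw [← hφφ' _ hcz, ← hφφ' _ hcw] at h
    simpa [inner_sub_left, inner_smul_left] using congrArg (inner ℂ · f) h.symm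
  have hqdiff : q z - q w = (z - w) * inner ℂ (φφ (conj w)) (φv z) := by
    simpa using hq z hz _ hcw
  have hR : inner ℂ (φφ (conj w)) (R z f) = inner ℂ (R (conj z) (φφ (conj w))) f := by
    rw [← hadj z hz, ContinuousLinearMap.adjoint_inner_left]
  have hkz : k z f * (q z + c) = inner ℂ (φφ (conj z)) f := by
    rw [hk z hz]
    field_simp
  rw [hk w hw, hT z hz, inner_sub_right, inner_smul_right, hR, hk w hw f]
  field_simp
  linear_combination -hdiff - k z f * hqdiff + hkz

/-- The scalar function `k(z, f) = ⟨f, φ_φ(conj z)⟩/(q(z) + c)` attached to the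
perturbed resolvent `T(z) f = (A - z)⁻¹ f - k(z, f)·φ_v(z)` satisfies the
resolvent-type identity `(w - z)·k(w, T(z) f) = k(w, f) - k(z, f)`.  The self-adjoint
operator `A` is encoded by its resolvent family `R` on the conjugation-invariant
resolvent set `ρ ∋ i`, satisfying the resolvent identity and
`((A - w)⁻¹)* = (A - conj w)⁻¹`; the paper's inner product `⟨x, y⟩`, conjugate-linear in
the second argument, is Mathlib's `⟪y, x⟫`. -/
theorem stmt11 {H : Type*} [NormedAddCommGroup H] [InnerProductSpace ℂ H] [CompleteSpace H]
    (ρ : Set ℂ) (R : ℂ → H →L[ℂ] H)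
    (hres : ∀ w ∈ ρ, ∀ z ∈ ρ, (w - z) • (R w ∘L R z) = R w - R z)
    (hconj : ∀ w ∈ ρ, (conj w : ℂ) ∈ ρ)
    (hadj : ∀ w ∈ ρ, ContinuousLinearMap.adjoint (R w) = R (conj w))
    (hi : Complex.I ∈ ρ)
    (v φ₀ : H) (φv φφ : ℂ → H)
    (hφv : ∀ w ∈ ρ, φv w = v + (w - Complex.I) • R w v)
    (hφφ : ∀ w ∈ ρ, φφ w = φ₀ + (w - Complex.I) • R w φ₀)
    (q : ℂ → ℂ)
    (hq : ∀ ζ ∈ ρ, ∀ w ∈ ρ,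
      q ζ - q (conj w) = (ζ - conj w) * (inner ℂ (φφ w) (φv ζ) : ℂ))
    (c : ℂ)
    (k : ℂ → H → ℂ)
    (hk : ∀ z ∈ ρ, ∀ f : H, k z f = (inner ℂ (φφ (conj z)) f : ℂ) / (q z + c))
    (T : ℂ → H → H)
    (hT : ∀ z ∈ ρ, ∀ f : H, T z f = R z f - k z f • φv z) :
    ∀ w ∈ ρ, ∀ z ∈ ρ, q w + c ≠ 0 → q z + c ≠ 0 → ∀ f : H,
      (w - z) * k w (T z f) = k w f - k z f :=
  stmt11_general ρ R hres hconj hadj φ₀ φv φφ hφφ q hq c k hk T hT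
end
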